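/- Let Φ be the standard normal CDF, a < b reals with Φ''(x) bounded away from zero in absolute value on a subinterval of [a,b]. Then there is a constant K > 0 such that for every piecewise affine function f : [a,b] → ℝ with N_A affine pieces, ∫_a^b |Φ(x) − f(x)| dx ≥ K / N_A^4. -/

import Mathlib

/-!
Every piece `[pᵢ, pᵢ₊₁]` of the partition meets `[u, v]` in an interval, and these intervals
cover `[u, v]`, so one of them, `[s, s + 4h]`, has length at least `(v - u) / N`. There `f` is
affine, so the second difference `w(x) + w(x + 2h) - 2w(x + h)` of `w = Φ - f` equals that of
`Φ`, which is `h² Φ''(ξ)` for some `ξ ∈ [u, v]`, hence at least `δh²` in absolute value.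
Integrating this over `x ∈ [s, s + 2h]` bounds `2δh³` by four times `∫ₛ^{s+4h} |w|`, which gives
the bound `δ (v - u)³ / (128 N³)`.
-/

open MeasureTheory

/-- The standard normal CDF. -/
noncomputable def Phi (z : ℝ) : ℝ :=
  (Real.sqrt (2 * Real.pi))⁻¹ * ∫ t in Set.Iic z, Real.exp (-t ^ 2 / 2)

open Set

theorem hasDerivAt_integral_Iic {E : Type*} [NormedAddCommGroup E] [NormedSpace ℝ E]
    [CompleteSpace E] {g : ℝ → E} (hg : Integrable g) (hc : Continuous g) (z : ℝ) :
    HasDerivAt (fun x => ∫ t in Iic x, g t) (g z) z := by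
  have hsplit : ∀ x, ∫ t in Iic x, g t = (∫ t in Iic 0, g t) + ∫ t in 0..x, g t := fun x => by
    rw [← intervalIntegral.integral_Iic_sub_Iic hg.integrableOn hg.integrableOn]; abel
  rw [funext hsplit]
  exact (intervalIntegral.integral_hasDerivAt_right hg.intervalIntegrable
    hg.aestronglyMeasurable.stronglyMeasurableAtFilter hc.continuousAt).const_add _

theorem hasDerivAt_Phi (z : ℝ) :
    HasDerivAt Phi ((Real.sqrt (2 * Real.pi))⁻¹ * Real.exp (-z ^ 2 / 2)) z := by
  have hint : Integrable fun t : ℝ => Real.exp (-t ^ 2 / 2) := by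
    simpa [div_eq_inv_mul] using integrable_exp_neg_mul_sq (b := 2⁻¹) (by norm_num)
  exact (hasDerivAt_integral_Iic hint (by fun_prop) z).const_mul _

theorem differentiable_Phi : Differentiable ℝ Phi := fun z => (hasDerivAt_Phi z).differentiableAt

theorem differentiable_deriv_Phi : Differentiable ℝ (deriv Phi) := by
  rw [funext fun z => (hasDerivAt_Phi z).deriv]
  fun_prop

theorem Fin.sum_succ_sub_castSucc {M : Type*} [AddCommGroup M] {n : ℕ} (f : Fin (n + 1) → M) :
    ∑ i : Fin n, (f i.succ - f i.castSucc) = f (Fin.last n) - f 0 := by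
  induction n with
  | zero => simp
  | succ n ih =>
    rw [Fin.sum_univ_castSucc]
    simp only [Fin.succ_castSucc]
    rw [ih (fun i => f i.castSucc)]
    simp

theorem IntervalIntegrable.trans_iterate_fin {f : ℝ → ℝ} {μ : Measure ℝ} {n : ℕ}
    (pts : Fin (n + 1) → ℝ) (h : ∀ i : Fin n, IntervalIntegrable f μ (pts i.castSucc) (pts i.succ)) :
    IntervalIntegrable f μ (pts 0) (pts (Fin.last n)) := by
  induction n with
  | zero => exact IntervalIntegrable.refl
  | succ n ih =>
    exact (ih (fun i => pts i.castSucc) fun i => by simpa using h i.castSucc).trans (h (Fin.last n))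

theorem intervalIntegrable_of_eqOn_affine_pieces {μ : Measure ℝ} [IsLocallyFiniteMeasure μ]
    {n : ℕ} {f : ℝ → ℝ} {pts : Fin (n + 1) → ℝ} (hmono : Monotone pts)
    (haff : ∀ i : Fin n, ∃ p q : ℝ, ∀ x ∈ Icc (pts i.castSucc) (pts i.succ), f x = p * x + q) :
    IntervalIntegrable f μ (pts 0) (pts (Fin.last n)) :=
  IntervalIntegrable.trans_iterate_fin pts fun i => by
    obtain ⟨p, q, hpq⟩ := haff i
    refine ContinuousOn.intervalIntegrable ?_
    rw [uIcc_of_le (hmono (Fin.castSucc_le_succ i))]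
    exact (continuousOn_id.const_mul p |>.add continuousOn_const).congr hpq

theorem Icc_max_min_subset_of_lt {u v x y : ℝ} (h : max u (min x v) < max u (min y v)) :
    Icc (max u (min x v)) (max u (min y v)) ⊆ Icc x y :=
  Icc_subset_Icc (by grind) (by grind)

theorem exists_long_piece_subset {n : ℕ} (hn : 0 < n) (pts : Fin (n + 1) → ℝ) {u v : ℝ}
    (huv : u < v) (h0 : pts 0 ≤ u) (hlast : v ≤ pts (Fin.last n)) :
    ∃ i : Fin n, ∃ s t : ℝ, (v - u) / n ≤ t - s ∧
      Icc s t ⊆ Icc (pts i.castSucc) (pts i.succ) ∩ Icc u v := by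
  -- clamping the points to `[u, v]` partitions `[u, v]` into subintervals of the pieces
  set c : ℝ → ℝ := fun x => max u (min x v)
  have htotal : ∑ _i : Fin n, (v - u) / n ≤ ∑ i : Fin n, (c (pts i.succ) - c (pts i.castSucc)) := by
    rw [Fin.sum_succ_sub_castSucc (fun j => c (pts j))]
    simp only [Finset.sum_const, Finset.card_univ, Fintype.card_fin, nsmul_eq_mul, c,
      min_eq_right hlast, max_eq_right huv.le, min_eq_left (h0.trans huv.le), max_eq_left h0]
    rw [mul_div_cancel₀ _ (Nat.cast_pos.2 hn).ne']
  obtain ⟨i, -, hi⟩ := Finset.exists_le_of_sum_le (Finset.univ_nonempty_iff.2 ⟨⟨0, hn⟩⟩) htotal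
  have hpos : 0 < (v - u) / n := div_pos (sub_pos.2 huv) (Nat.cast_pos.2 hn)
  exact ⟨i, _, _, hi, subset_inter (Icc_max_min_subset_of_lt (by linarith))
    (Icc_subset_Icc (le_max_left _ _) (max_le huv.le (min_le_right _ _)))⟩

def secondDiff (w : ℝ → ℝ) (x h : ℝ) : ℝ := w x + w (x + 2 * h) - 2 * w (x + h)

theorem exists_secondDiff_eq_deriv2 {g : ℝ → ℝ} (hg : Differentiable ℝ g)
    (hg' : Differentiable ℝ (deriv g)) (x : ℝ) {h : ℝ} (hh : 0 < h) :
    ∃ ξ ∈ Ioo x (x + 2 * h), secondDiff g x h = h ^ 2 * deriv (deriv g) ξ := by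
  obtain ⟨η, hη, hslope⟩ := exists_hasDerivAt_eq_slope (fun y => g (y + h) - g y)
    (fun y => deriv g (y + h) - deriv g y) (by linarith : x < x + h)
    (by have := hg.continuous; fun_prop)
    fun y _ => ((hg (y + h)).hasDerivAt.comp_add_const y h).sub (hg y).hasDerivAt
  obtain ⟨ξ, hξ, hslope'⟩ := exists_hasDerivAt_eq_slope (deriv g) (deriv (deriv g))
    (by linarith : η < η + h) hg'.continuous.continuousOn fun y _ => (hg' y).hasDerivAt
  refine ⟨ξ, ⟨by linarith [hη.1, hξ.1], by linarith [hη.2, hξ.2]⟩, ?_⟩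
  rw [hslope', hslope, secondDiff, show x + h + h = x + 2 * h by ring,
    show x + h - x = h by ring, show η + h - η = h by ring]
  field_simp
  ring

theorem le_abs_secondDiff_sub_of_eqOn_affine {g f : ℝ → ℝ} (hg : Differentiable ℝ g)
    (hg' : Differentiable ℝ (deriv g)) {u v δ p q x h : ℝ} (hh : 0 < h)
    (hδ : ∀ y ∈ Icc u v, δ ≤ |deriv (deriv g) y|) (hx : Icc x (x + 2 * h) ⊆ Icc u v)
    (hf : EqOn f (fun y => p * y + q) (Icc x (x + 2 * h))) :
    δ * h ^ 2 ≤ |secondDiff (g - f) x h| := by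
  have hfx : secondDiff f x h = 0 := by
    have h0 : f x = p * x + q := hf ⟨le_rfl, by linarith⟩
    have h1 : f (x + h) = p * (x + h) + q := hf ⟨by linarith, by linarith⟩
    have h2 : f (x + 2 * h) = p * (x + 2 * h) + q := hf ⟨by linarith, le_rfl⟩
    rw [secondDiff, h0, h1, h2]; ring
  have hsub : secondDiff (g - f) x h = secondDiff g x h - secondDiff f x h := by
    simp only [secondDiff, Pi.sub_apply]; ring
  obtain ⟨ξ, hξ, hgx⟩ := exists_secondDiff_eq_deriv2 hg hg' x hh
  rw [hsub, hfx, sub_zero, hgx, abs_mul, abs_of_pos (by positivity), mul_comm]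
  exact mul_le_mul_of_nonneg_left (hδ ξ (hx (Ioo_subset_Icc_self hξ))) (sq_nonneg h)

theorem mul_le_integral_abs_of_le_abs_secondDiff {w : ℝ → ℝ} {s h c : ℝ} (hh : 0 < h)
    (hw : IntervalIntegrable w volume s (s + 4 * h))
    (hc : ∀ x ∈ Icc s (s + 2 * h), c ≤ |secondDiff w x h|) :
    c * h / 2 ≤ ∫ x in s..s + 4 * h, |w x| := by
  set F := fun x => |w x|
  have hF : IntervalIntegrable F volume s (s + 4 * h) := hw.abs
  have shift : ∀ a ∈ Icc 0 (2 * h), IntervalIntegrable (fun x => F (x + a)) volume s (s + 2 * h)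
      ∧ ∫ x in s..s + 2 * h, F (x + a) ≤ ∫ x in s..s + 4 * h, F x := by
    intro a ha
    have hFa : IntervalIntegrable F volume (s + a) (s + 2 * h + a) :=
      hF.mono_set (by
        rw [uIcc_of_le (by linarith), uIcc_of_le (by linarith)]
        exact Icc_subset_Icc (by linarith [ha.1]) (by linarith [ha.2]))
    refine ⟨by simpa using hFa.comp_add_right a, ?_⟩
    rw [intervalIntegral.integral_comp_add_right F a]
    exact intervalIntegral.integral_mono_interval (by linarith [ha.1]) (by linarith)
      (by linarith [ha.2]) (Filter.Eventually.of_forall fun x => abs_nonneg _) hF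
  obtain ⟨h0, I0⟩ := shift 0 ⟨le_rfl, by linarith⟩
  obtain ⟨h1, I1⟩ := shift h ⟨hh.le, by linarith⟩
  obtain ⟨h2, I2⟩ := shift (2 * h) ⟨by linarith, le_rfl⟩
  simp only [add_zero] at h0 I0
  have hsum : 2 * h * c ≤ ∫ x in s..s + 2 * h, (F x + F (x + 2 * h) + 2 * F (x + h)) := by
    have := intervalIntegral.integral_mono_on (by linarith) intervalIntegrable_const
      ((h0.add h2).add (h1.const_mul 2)) fun x hx => (hc x hx).trans <|
        (abs_sub _ _).trans <| by
          rw [abs_mul, abs_two]; linarith [abs_add_le (w x) (w (x + 2 * h))]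
    simpa using this
  rw [intervalIntegral.integral_add (h0.add h2) (h1.const_mul 2),
    intervalIntegral.integral_add h0 h2, intervalIntegral.integral_const_mul] at hsum
  linarith

theorem piecewise_affine_approx_normal_cdf_lower_bound_general
    (a b u v δ : ℝ) (hu : a ≤ u) (huv : u < v) (hv : v ≤ b)
    (hδ : 0 < δ) (hΦ'' : ∀ x ∈ Set.Icc u v, δ ≤ |deriv (deriv Phi) x|) :
    ∃ K : ℝ, 0 < K ∧
      ∀ (NA : ℕ), 0 < NA →
      ∀ (f : ℝ → ℝ) (pts : Fin (NA + 1) → ℝ),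
        Monotone pts → pts 0 = a → pts (Fin.last NA) = b →
        (∀ i : Fin NA, ∃ p q : ℝ,
          ∀ x ∈ Set.Icc (pts i.castSucc) (pts i.succ), f x = p * x + q) →
        K / (NA : ℝ) ^ 4 ≤ ∫ x in a..b, |Phi x - f x| := by
  have hvu : 0 < v - u := sub_pos.2 huv
  refine ⟨δ * (v - u) ^ 3 / 128, by positivity, ?_⟩
  intro NA hNA f pts hmono h0 hlast haff
  obtain ⟨i, s, t, hlong, hst⟩ := exists_long_piece_subset hNA pts huv (h0 ▸ hu) (hlast ▸ hv)
  obtain ⟨p, q, hpq⟩ := haff i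
  have hN : (1 : ℝ) ≤ NA := Nat.one_le_cast.2 hNA
  set h := (t - s) / 4
  have hh : 0 < h := div_pos (by linarith [div_pos hvu (zero_lt_one.trans_le hN)]) four_pos
  have ht : t = s + 4 * h := by ring
  obtain ⟨hus, htv⟩ := (Icc_subset_Icc_iff (by linarith)).1 (hst.trans inter_subset_right)
  have hint : IntervalIntegrable (fun x => Phi x - f x) volume a b := h0 ▸ hlast ▸
    (differentiable_Phi.continuous.intervalIntegrable _ _).sub
      (intervalIntegrable_of_eqOn_affine_pieces hmono haff)
  have hsd : ∀ x ∈ Icc s (s + 2 * h), δ * h ^ 2 ≤ |secondDiff (Phi - f) x h| := fun x hx => by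
    have hsub : Icc x (x + 2 * h) ⊆ Icc s t := Icc_subset_Icc hx.1 (by linarith [hx.2])
    exact le_abs_secondDiff_sub_of_eqOn_affine differentiable_Phi differentiable_deriv_Phi hh
      hΦ'' (hsub.trans fun y hy => (hst hy).2) fun y hy => hpq y (hst (hsub hy)).1
  have hlow := mul_le_integral_abs_of_le_abs_secondDiff hh
    (hint.mono_set (uIcc_subset_uIcc (mem_uIcc_of_le (by linarith) (by linarith))
      (mem_uIcc_of_le (by linarith) (by linarith)))) hsd
  calc δ * (v - u) ^ 3 / 128 / (NA : ℝ) ^ 4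
      ≤ δ * (v - u) ^ 3 / 128 / (NA : ℝ) ^ 3 := by gcongr; norm_num
    _ = δ / 128 * ((v - u) / NA) ^ 3 := by ring
    _ ≤ δ / 128 * (4 * h) ^ 3 := by gcongr; linarith
    _ = δ * h ^ 2 * h / 2 := by ring
    _ ≤ ∫ x in s..t, |Phi x - f x| := ht ▸ hlow
    _ ≤ ∫ x in a..b, |Phi x - f x| :=
      intervalIntegral.integral_mono_interval (by linarith) (by linarith) (by linarith)
        (Filter.Eventually.of_forall fun x => abs_nonneg _) hint.abs

theorem piecewise_affine_approx_normal_cdf_lower_bound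
    (a b u v δ : ℝ) (hab : a < b) (hu : a ≤ u) (huv : u < v) (hv : v ≤ b)
    (hδ : 0 < δ) (hΦ'' : ∀ x ∈ Set.Icc u v, δ ≤ |deriv (deriv Phi) x|) :
    ∃ K : ℝ, 0 < K ∧
      ∀ (NA : ℕ), 0 < NA →
      ∀ (f : ℝ → ℝ) (pts : Fin (NA + 1) → ℝ),
        Monotone pts → pts 0 = a → pts (Fin.last NA) = b →
        (∀ i : Fin NA, ∃ p q : ℝ,
          ∀ x ∈ Set.Icc (pts i.castSucc) (pts i.succ), f x = p * x + q) →
        K / (NA : ℝ) ^ 4 ≤ ∫ x in a..b, |Phi x - f x| :=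
  piecewise_affine_approx_normal_cdf_lower_bound_general a b u v δ hu huv hv hδ hΦ''
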